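/- For each f ∈ F let f# be a fresh marked symbol of the same arity and F# = {f# | f ∈ F}; for a non-variable term t = f(t_1,…,t_n) over F write t# = f#(t_1,…,t_n). Let A be a weakly monotone well-founded ordered (F ∪ F#)-algebra and ≿ a precedence on F. Define on non-variable F-terms s = f(…), t = g(…): s ⊒∼ t iff s# >_A t#, or (s# ≥_A t# and f ≿ g); s ⊐ t iff s# >_A t#, or (s# ≥_A t# and f ≻ g); and let ≳ be the restriction of ≥_A to T(F,V). Then (≳, ⊒∼, ⊐) is a reduction triple on T(F,V): ≳ is a rewrite preorder, (⊒∼, ⊐) is a stable order pair on T(F,V)∖V with ⊐ well-founded, and ≳ and ⊒∼ have the harmony property. -/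

import Mathlib

/-- First-order terms over a signature `F` with arity function `ar` and variables `V`. -/
inductive Term (F : Type) (ar : F → ℕ) (V : Type) : Type where
  | var : V → Term F ar V
  | app : (f : F) → (Fin (ar f) → Term F ar V) → Term F ar V

namespace Term

variable {F V : Type} {ar : F → ℕ}

/-- Application of a substitution `σ : V → Term F ar V` to a term. -/
def subst (σ : V → Term F ar V) : Term F ar V → Term F ar V
  | var v => σ v
  | app f args => app f (fun i => (args i).subst σ)

/-- Interpretation of a term in an `F`-algebra with carrier `A` under assignment `α`. -/
def eval {A : Type} (I : (f : F) → (Fin (ar f) → A) → A) (α : V → A) :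
    Term F ar V → A
  | var v => α v
  | app f args => I f (fun i => (args i).eval I α)

/-- A term is a non-variable term (function application). -/
def IsApp : Term F ar V → Prop
  | var _ => False
  | app _ _ => True

end Term

section Algebra

variable {F V A : Type}

/-- `RC lt a b` : reflexive closure of the strict order `lt`, i.e. `a ≤ b`. -/
def RC (lt : A → A → Prop) (a b : A) : Prop := lt a b ∨ a = b

variable (ar : F → ℕ) (I : (f : F) → (Fin (ar f) → A) → A) (lt : A → A → Prop)

/-- `s >_A t` : `[α](t) < [α](s)` for every assignment `α`. -/
def GTA (s t : Term F ar V) : Prop := ∀ α : V → A, lt (t.eval I α) (s.eval I α)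

/-- `s ≥_A t` : `[α](t) ≤ [α](s)` for every assignment `α`. -/
def GEA (s t : Term F ar V) : Prop := ∀ α : V → A, RC lt (t.eval I α) (s.eval I α)

/-- The algebra is simple: `f_A(a_1, …, a_n) ≥ a_i`. -/
def Simple : Prop := ∀ (f : F) (as : Fin (ar f) → A) (i : Fin (ar f)), RC lt (as i) (I f as)

/-- The algebra is weakly monotone: `a_i > b` implies
`f_A(a_1,…,a_i,…,a_n) ≥ f_A(a_1,…,b,…,a_n)`. -/
def WeaklyMonotone : Prop :=
  ∀ (f : F) (as : Fin (ar f) → A) (i : Fin (ar f)) (b : A),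
    lt b (as i) → RC lt (I f (Function.update as i b)) (I f as)

end Algebra

section WPO

variable {F V A : Type} (ar : F → ℕ) (I : (f : F) → (Fin (ar f) → A) → A)
  (lt : A → A → Prop) (prec : F → F → Prop)

mutual
  /-- The weighted path order induced by the algebra `(A, I, lt)` and the precedence `prec`. -/
  inductive WPO : Term F ar V → Term F ar V → Prop where
    /-- (1) `s >_A t`. -/
    | alg {s t} : GTA ar I lt s t → WPO s t
    /-- (2a) `s ≥_A t` and `s_i >_wpo t`. -/
    | sub {f ss t} (i : Fin (ar f)) :
        GEA ar I lt (Term.app f ss) t → WPO (ss i) t → WPO (Term.app f ss) t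
    /-- (2a) `s ≥_A t` and `s_i = t`. -/
    | subEq {f ss t} (i : Fin (ar f)) :
        GEA ar I lt (Term.app f ss) t → ss i = t → WPO (Term.app f ss) t
    /-- (2b-i) `s ≥_A t`, `s >_wpo t_j` for all `j`, and `f ≻ g`. -/
    | prc {f ss g ts} :
        GEA ar I lt (Term.app f ss) (Term.app g ts) →
        (∀ j, WPO (Term.app f ss) (ts j)) →
        prec f g → ¬ prec g f → WPO (Term.app f ss) (Term.app g ts)
    /-- (2b-ii) `s ≥_A t`, `s >_wpo t_j` for all `j`, `f ≿ g` and lex comparison of arguments. -/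
    | lex {f ss g ts} :
        GEA ar I lt (Term.app f ss) (Term.app g ts) →
        (∀ j, WPO (Term.app f ss) (ts j)) →
        prec f g → WPOLex (List.ofFn ss) (List.ofFn ts) →
        WPO (Term.app f ss) (Term.app g ts)

  /-- Lexicographic extension of `WPO` to argument lists (of possibly different lengths). -/
  inductive WPOLex : List (Term F ar V) → List (Term F ar V) → Prop where
    | head {s t l₁ l₂} : WPO s t → WPOLex (s :: l₁) (t :: l₂)
    | tail {s l₁ l₂} : WPOLex l₁ l₂ → WPOLex (s :: l₁) (s :: l₂)
    | longer {s l₁} : WPOLex (s :: l₁) []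
end

end WPO

section SPO

variable {F V : Type} {ar : F → ℕ} (qge qgt : Term F ar V → Term F ar V → Prop)

mutual
  /-- The semantic path order induced by the order pair `(qge, qgt)` (`⊒∼`, `⊐`). -/
  inductive SPO : Term F ar V → Term F ar V → Prop where
    /-- (1) `s_i >_spo t`. -/
    | sub {f ss t} (i : Fin (ar f)) : SPO (ss i) t → SPO (Term.app f ss) t
    /-- (1) `s_i = t`. -/
    | subEq {f ss t} (i : Fin (ar f)) : ss i = t → SPO (Term.app f ss) t
    /-- (2a) `s >_spo t_j` for all `j` and `s ⊐ t`. -/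
    | gt {f ss g ts} : (∀ j, SPO (Term.app f ss) (ts j)) →
        qgt (Term.app f ss) (Term.app g ts) → SPO (Term.app f ss) (Term.app g ts)
    /-- (2b) `s >_spo t_j` for all `j`, `s ⊒∼ t` and lex comparison of arguments. -/
    | lex {f ss g ts} : (∀ j, SPO (Term.app f ss) (ts j)) →
        qge (Term.app f ss) (Term.app g ts) →
        SPOLex (List.ofFn ss) (List.ofFn ts) → SPO (Term.app f ss) (Term.app g ts)

  /-- Lexicographic extension of `SPO` to argument lists. -/
  inductive SPOLex : List (Term F ar V) → List (Term F ar V) → Prop where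
    | head {s t l₁ l₂} : SPO s t → SPOLex (s :: l₁) (t :: l₂)
    | tail {s l₁ l₂} : SPOLex l₁ l₂ → SPOLex (s :: l₁) (s :: l₂)
    | longer {s l₁} : SPOLex (s :: l₁) []
end

end SPO

section Props

variable {F V : Type} {ar : F → ℕ}

/-- Closure under contexts: replacing one argument. -/
def ClosedCtx (R : Term F ar V → Term F ar V → Prop) : Prop :=
  ∀ (f : F) (args : Fin (ar f) → Term F ar V) (i : Fin (ar f)) (s t : Term F ar V),
    R s t → R (Term.app f (Function.update args i s)) (Term.app f (Function.update args i t))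

/-- Closure under substitutions. -/
def ClosedSubst (R : Term F ar V → Term F ar V → Prop) : Prop :=
  ∀ (σ : V → Term F ar V) (s t : Term F ar V), R s t → R (s.subst σ) (t.subst σ)

/-- A reduction order: a well-founded strict order closed under contexts and substitutions. -/
def ReductionOrder (R : Term F ar V → Term F ar V → Prop) : Prop :=
  (∀ s, ¬ R s s) ∧ Transitive R ∧ WellFounded (fun s t => R t s) ∧
    ClosedCtx R ∧ ClosedSubst R

/-- `Subterm t s` : `t` is a subterm of `s`. -/
inductive Subterm : Term F ar V → Term F ar V → Prop where
  | refl {t} : Subterm t t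
  | arg {t f ss} (i : Fin (ar f)) : Subterm t (ss i) → Subterm t (Term.app f ss)

/-- `ProperSubterm t s` : `t` is a proper subterm of `s`. -/
def ProperSubterm (t s : Term F ar V) : Prop :=
  ∃ (f : F) (ss : Fin (ar f) → Term F ar V) (i : Fin (ar f)),
    s = Term.app f ss ∧ Subterm t (ss i)

/-- The rewrite relation of a TRS `R`: closure of the rules under substitutions and contexts. -/
inductive Rewrite (R : Set (Term F ar V × Term F ar V)) : Term F ar V → Term F ar V → Prop where
  | rule {l r} (σ : V → Term F ar V) : (l, r) ∈ R → Rewrite R (l.subst σ) (r.subst σ)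
  | ctx {s t} (f : F) (args : Fin (ar f) → Term F ar V) (i : Fin (ar f)) :
      Rewrite R s t →
      Rewrite R (Term.app f (Function.update args i s)) (Term.app f (Function.update args i t))

end Props

section Pair

variable {F V A : Type} (ar : F → ℕ) (I : (f : F) → (Fin (ar f) → A) → A)
  (lt : A → A → Prop) (prec : F → F → Prop)

/-- `s ⊒∼ t` : both non-variable, and `s >_A t`, or `s ≥_A t` and `root(s) ≿ root(t)`. -/
def QGE (s t : Term F ar V) : Prop :=
  ∃ (f : F) (ss : Fin (ar f) → Term F ar V) (g : F) (ts : Fin (ar g) → Term F ar V),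
    s = Term.app f ss ∧ t = Term.app g ts ∧
      (GTA ar I lt s t ∨ (GEA ar I lt s t ∧ prec f g))

/-- `s ⊐ t` : both non-variable, and `s >_A t`, or `s ≥_A t` and `root(s) ≻ root(t)`. -/
def QGT (s t : Term F ar V) : Prop :=
  ∃ (f : F) (ss : Fin (ar f) → Term F ar V) (g : F) (ts : Fin (ar g) → Term F ar V),
    s = Term.app f ss ∧ t = Term.app g ts ∧
      (GTA ar I lt s t ∨ (GEA ar I lt s t ∧ prec f g ∧ ¬ prec g f))

variable (Im : (f : F) → (Fin (ar f) → A) → A)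

/-- Interpretation of the marked term `t♯` (root symbol interpreted by `Im`). -/
def evalSharp (α : V → A) : Term F ar V → A
  | .var v => α v
  | .app f ts => Im f (fun i => (ts i).eval I α)

/-- `s♯ >_A t♯`. -/
def GTAS (s t : Term F ar V) : Prop :=
  ∀ α : V → A, lt (evalSharp ar I Im α t) (evalSharp ar I Im α s)

/-- `s♯ ≥_A t♯`. -/
def GEAS (s t : Term F ar V) : Prop :=
  ∀ α : V → A, RC lt (evalSharp ar I Im α t) (evalSharp ar I Im α s)

/-- Marked version of `⊒∼` : `s♯ >_A t♯`, or `s♯ ≥_A t♯` and `root(s) ≿ root(t)`. -/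
def QGES (s t : Term F ar V) : Prop :=
  ∃ (f : F) (ss : Fin (ar f) → Term F ar V) (g : F) (ts : Fin (ar g) → Term F ar V),
    s = Term.app f ss ∧ t = Term.app g ts ∧
      (GTAS ar I lt Im s t ∨ (GEAS ar I lt Im s t ∧ prec f g))

/-- Marked version of `⊐` : `s♯ >_A t♯`, or `s♯ ≥_A t♯` and `root(s) ≻ root(t)`. -/
def QGTS (s t : Term F ar V) : Prop :=
  ∃ (f : F) (ss : Fin (ar f) → Term F ar V) (g : F) (ts : Fin (ar g) → Term F ar V),
    s = Term.app f ss ∧ t = Term.app g ts ∧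
      (GTAS ar I lt Im s t ∨ (GEAS ar I lt Im s t ∧ prec f g ∧ ¬ prec g f))

/-- The generalized weighted path order: `s ≥_A t` and `s >_spo t` for the SPO induced
from the marked order pair. -/
def GWPO (s t : Term F ar V) : Prop :=
  GEA ar I lt s t ∧ SPO (QGES ar I lt prec Im) (QGTS ar I lt prec Im) s t

end Pair

/-!
The weak part `≥_A` is closed under contexts because the algebra is weakly monotone, and under
substitutions because evaluating `tσ` under `α` is evaluating `t` under `x ↦ [α](σ x)`. Both
`⊒∼` and `⊐` are lexicographic combinations of the order pair `(≥_A, >_A)` on marked terms with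
a relation on root symbols (`≿` resp. `≻`), so every order-pair law reduces to one four-case
composition lemma for such combinations; well-foundedness of `⊐` comes from the lexicographic
product of `>` on `A` (at one fixed assignment) with `≻`, which is well-founded as `F` is finite.
-/

section StrictOrder

variable {A : Type} {lt : A → A → Prop}

theorem RC.trans (htrans : Transitive lt) {a b c : A} : RC lt a b → RC lt b c → RC lt a c := by
  rintro (hab | rfl) (hbc | rfl)
  exacts [.inl (htrans hab hbc), .inl hab, .inl hbc, .inr rfl]

theorem lt_of_rc_of_lt (htrans : Transitive lt) {a b c : A} : RC lt a b → lt b c → lt a c := by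
  rintro (hab | rfl) hbc
  exacts [htrans hab hbc, hbc]

theorem lt_of_lt_of_rc (htrans : Transitive lt) {a b c : A} : lt a b → RC lt b c → lt a c := by
  rintro hab (hbc | rfl)
  exacts [htrans hab hbc, hab]

end StrictOrder

section Evaluation

variable {F V A : Type} {ar : F → ℕ} (I : (f : F) → (Fin (ar f) → A) → A)

theorem Term.eval_subst (σ : V → Term F ar V) (α : V → A) :
    ∀ t : Term F ar V, (t.subst σ).eval I α = t.eval I fun v => (σ v).eval I α
  | .var _ => rfl
  | .app f ts => congrArg (I f) (funext fun i => eval_subst σ α (ts i))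

theorem evalSharp_app_subst (Im : (f : F) → (Fin (ar f) → A) → A) (σ : V → Term F ar V)
    (α : V → A) (f : F) (ts : Fin (ar f) → Term F ar V) :
    evalSharp ar I Im α ((Term.app f ts).subst σ) =
      evalSharp ar I Im (fun v => (σ v).eval I α) (Term.app f ts) :=
  congrArg (Im f) (funext fun i => (ts i).eval_subst I σ α)

variable {I}

theorem WeaklyMonotone.rc_update {lt : A → A → Prop} (hmono : WeaklyMonotone ar I lt)
    (f : F) (as : Fin (ar f) → A) (i : Fin (ar f)) {a b : A} (hba : RC lt b a) :
    RC lt (I f (Function.update as i b)) (I f (Function.update as i a)) := by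
  rcases hba with hba | rfl
  · simpa using hmono f (Function.update as i a) i b (by simpa using hba)
  · exact .inr rfl

theorem WeaklyMonotone.rc_app_update {lt : A → A → Prop} {J : (f : F) → (Fin (ar f) → A) → A}
    (hmono : WeaklyMonotone ar J lt) (α : V → A) (f : F) (ss : Fin (ar f) → Term F ar V)
    (i : Fin (ar f)) {s t : Term F ar V} (hts : RC lt (t.eval I α) (s.eval I α)) :
    RC lt (J f fun j => (Function.update ss i t j).eval I α)
      (J f fun j => (Function.update ss i s j).eval I α) := by
  have hupdate : ∀ u : Term F ar V, (fun j => (Function.update ss i u j).eval I α) =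
      Function.update (fun j => (ss j).eval I α) i (u.eval I α) :=
    fun u => Function.comp_update _ ss i u
  rw [hupdate, hupdate]
  exact hmono.rc_update f _ i hts

end Evaluation

section AlgebraOrder

variable {F V A : Type} {ar : F → ℕ} {I : (f : F) → (Fin (ar f) → A) → A} {lt : A → A → Prop}

theorem gea_refl (t : Term F ar V) : GEA ar I lt t t := fun _ => .inr rfl

theorem gea_trans (htrans : Transitive lt) : Transitive (GEA (V := V) ar I lt) :=
  fun _ _ _ hst htu α => RC.trans htrans (htu α) (hst α)

theorem gea_closedCtx (hmono : WeaklyMonotone ar I lt) : ClosedCtx (GEA (V := V) ar I lt) :=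
  fun f args i _ _ hst α => hmono.rc_app_update α f args i (hst α)

theorem gea_closedSubst : ClosedSubst (GEA (V := V) ar I lt) := by
  intro σ s t hst α
  rw [s.eval_subst, t.eval_subst]
  exact hst _

end AlgebraOrder

section MarkedLex

variable {F V A : Type} (ar : F → ℕ) (I Im : (f : F) → (Fin (ar f) → A) → A)
  (lt : A → A → Prop)

/-- The lexicographic combination of `(≥_A, >_A)` on marked terms with a relation `r` on the
root symbols; `⊒∼` and `⊐` are the cases `r = ≿` and `r = ≻`. -/
def MarkedLex (r : F → F → Prop) (s t : Term F ar V) : Prop :=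
  ∃ (f : F) (ss : Fin (ar f) → Term F ar V) (g : F) (ts : Fin (ar g) → Term F ar V),
    s = Term.app f ss ∧ t = Term.app g ts ∧
      (GTAS ar I lt Im s t ∨ (GEAS ar I lt Im s t ∧ r f g))

variable {ar I Im lt}

namespace MarkedLex

theorem refl {r : F → F → Prop} (hr : ∀ f, r f f) {t : Term F ar V} (ht : t.IsApp) :
    MarkedLex ar I Im lt r t t := by
  cases t with
  | var => exact ht.elim
  | app f ts => exact ⟨f, ts, f, ts, rfl, rfl, .inr ⟨fun _ => .inr rfl, hr f⟩⟩

theorem irrefl [Nonempty A] (hlt : ∀ a, ¬ lt a a) {r : F → F → Prop} (hr : ∀ f, ¬ r f f)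
    (s : Term F ar V) : ¬ MarkedLex ar I Im lt r s s := by
  rintro ⟨f, ss, g, ts, rfl, ⟨⟩, hgt | ⟨-, hff⟩⟩
  exacts [hlt _ (hgt fun _ => Classical.arbitrary A), hr f hff]

theorem comp (htrans : Transitive lt) {r r' r'' : F → F → Prop} {s t u : Term F ar V}
    (hst : MarkedLex ar I Im lt r s t) (htu : MarkedLex ar I Im lt r' t u)
    (hr : ∀ f g h, r f g → r' g h → r'' f h) : MarkedLex ar I Im lt r'' s u := by
  obtain ⟨f, ss, g, ts, rfl, rfl, hst⟩ := hst
  obtain ⟨g, ts, h, us, ⟨⟩, rfl, htu⟩ := htu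
  refine ⟨f, ss, h, us, rfl, rfl, ?_⟩
  rcases hst with hst | ⟨hst, hfg⟩ <;> rcases htu with htu | ⟨htu, hgh⟩
  · exact .inl fun α => htrans (htu α) (hst α)
  · exact .inl fun α => lt_of_rc_of_lt htrans (htu α) (hst α)
  · exact .inl fun α => lt_of_lt_of_rc htrans (htu α) (hst α)
  · exact .inr ⟨fun α => RC.trans htrans (htu α) (hst α), hr f g h hfg hgh⟩

theorem trans (htrans : Transitive lt) {r : F → F → Prop}
    (hr : ∀ f g h, r f g → r g h → r f h) : Transitive (MarkedLex (V := V) ar I Im lt r) :=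
  fun _ _ _ hst htu => hst.comp htrans htu hr

theorem lt_of_le_of_lt_of_le [Preorder F] (htrans : Transitive lt) {s t u v : Term F ar V}
    (hst : MarkedLex ar I Im lt (· ≤ ·) s t) (htu : MarkedLex ar I Im lt (· < ·) t u)
    (huv : MarkedLex ar I Im lt (· ≤ ·) u v) : MarkedLex ar I Im lt (· < ·) s v := by
  have hsu : MarkedLex ar I Im lt (· < ·) s u := hst.comp htrans htu fun _ _ _ => lt_of_le_of_lt
  exact hsu.comp htrans huv fun _ _ _ => lt_of_lt_of_le

theorem closedSubst (r : F → F → Prop) : ClosedSubst (MarkedLex (V := V) ar I Im lt r) := by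
  rintro σ s t ⟨f, ss, g, ts, rfl, rfl, hst⟩
  refine ⟨f, _, g, _, rfl, rfl, ?_⟩
  simp only [GTAS, GEAS, evalSharp_app_subst] at hst ⊢
  exact hst.imp (fun h _ => h _) (And.imp_left fun h _ => h _)

theorem app_update (hmono : WeaklyMonotone ar Im lt) {r : F → F → Prop} (hr : ∀ f, r f f)
    (f : F) (ss : Fin (ar f) → Term F ar V) (i : Fin (ar f)) {t : Term F ar V}
    (ht : GEA ar I lt (ss i) t) :
    MarkedLex ar I Im lt r (Term.app f ss) (Term.app f (Function.update ss i t)) := by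
  refine ⟨f, ss, f, _, rfl, rfl, .inr ⟨fun α => ?_, hr f⟩⟩
  simpa only [evalSharp, Function.update_eq_self] using hmono.rc_app_update α f ss i (ht α)

theorem wellFounded [Nonempty A] (hlt : WellFounded lt) {r : F → F → Prop}
    (hr : WellFounded fun f g => r g f) :
    WellFounded fun s t : Term F ar V => MarkedLex ar I Im lt r t s := by
  let α₀ : V → A := fun _ => Classical.arbitrary A
  let μ : (Σ f, Fin (ar f) → Term F ar V) → A × F :=
    fun p => (evalSharp ar I Im α₀ (Term.app p.1 p.2), p.1)
  have hacc : ∀ p : Σ f, Fin (ar f) → Term F ar V,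
      Acc (fun s t => MarkedLex ar I Im lt r t s) (Term.app p.1 p.2) := by
    intro p
    induction p using (InvImage.wf μ (hlt.prod_lex hr)).induction with
    | _ p ih =>
      refine ⟨_, ?_⟩
      rintro _ ⟨f, ss, g, ts, ⟨⟩, rfl, hst⟩
      refine ih ⟨g, ts⟩ ?_
      rcases hst with hst | ⟨hst, hfg⟩
      · exact .left _ _ (hst α₀)
      · rcases hst α₀ with hlt' | heq
        · exact .left _ _ hlt'
        · change Prod.Lex _ _ (_, g) (_, p.1)
          rw [heq]
          exact .right _ hfg
  refine ⟨fun t => ?_⟩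
  cases t with
  | var => exact ⟨_, by rintro _ ⟨_, _, _, _, ⟨⟩, _⟩⟩
  | app f ts => exact hacc ⟨f, ts⟩

end MarkedLex

end MarkedLex

/-- For a weakly monotone well-founded ordered `(F ∪ F♯)`-algebra
(interpretations `I` for `F` and `Im` for the marked copies `F♯`) and a precedence on `F`,
the triple `(≥_A, ⊒∼, ⊐)` (here `GEA`, `QGES`, `QGTS`) is a reduction triple: `≥_A` is a
rewrite preorder, `(⊒∼, ⊐)` is a stable order pair on non-variable terms with `⊐`
well-founded, and `≥_A` and `⊒∼` have the harmony property. -/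
theorem marked_reduction_triple
    {F V A : Type} [Fintype F] [Countable V] [Infinite V] [Nonempty A]
    (ar : F → ℕ) (I Im : (f : F) → (Fin (ar f) → A) → A) (lt : A → A → Prop)
    (lt_irrefl : ∀ a, ¬ lt a a) (lt_trans : Transitive lt)
    (lt_wf : WellFounded lt)
    (hmono : WeaklyMonotone ar I lt) (hmonoS : WeaklyMonotone ar Im lt)
    (prec : F → F → Prop) (prec_refl : ∀ f, prec f f)
    (prec_trans : ∀ f g h, prec f g → prec g h → prec f h) :
    -- `≥_A` is a rewrite preorder on `T(F,V)`
    (∀ t : Term F ar V, GEA ar I lt t t) ∧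
    Transitive (GEA (V := V) ar I lt) ∧
    ClosedCtx (GEA (V := V) ar I lt) ∧
    ClosedSubst (GEA (V := V) ar I lt) ∧
    -- `(⊒∼, ⊐)` is a stable order pair on non-variable terms
    (∀ t : Term F ar V, t.IsApp → QGES ar I lt prec Im t t) ∧
    Transitive (QGES (V := V) ar I lt prec Im) ∧
    (∀ s : Term F ar V, ¬ QGTS ar I lt prec Im s s) ∧
    Transitive (QGTS (V := V) ar I lt prec Im) ∧
    (∀ s t u v : Term F ar V, QGES ar I lt prec Im s t → QGTS ar I lt prec Im t u →
      QGES ar I lt prec Im u v → QGTS ar I lt prec Im s v) ∧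
    ClosedSubst (QGES (V := V) ar I lt prec Im) ∧
    ClosedSubst (QGTS (V := V) ar I lt prec Im) ∧
    -- `⊐` is well-founded
    WellFounded (fun s t : Term F ar V => QGTS ar I lt prec Im t s) ∧
    -- harmony of `≥_A` and `⊒∼`
    (∀ (f : F) (ss : Fin (ar f) → Term F ar V) (i : Fin (ar f)) (t : Term F ar V),
      GEA ar I lt (ss i) t →
      QGES ar I lt prec Im (Term.app f ss) (Term.app f (Function.update ss i t))) := by
  -- the default `<` of this preorder is `prec f g ∧ ¬ prec g f`, so `hqgts` holds by `rfl`
  let _ : Preorder F := { le := prec, le_refl := prec_refl, le_trans := prec_trans }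
  have hqges : QGES (V := V) ar I lt prec Im = MarkedLex ar I Im lt (· ≤ ·) := rfl
  have hqgts : QGTS (V := V) ar I lt prec Im = MarkedLex ar I Im lt (· < ·) := rfl
  rw [hqges, hqgts]
  refine ⟨gea_refl, gea_trans lt_trans, gea_closedCtx hmono, gea_closedSubst,
    fun _ => MarkedLex.refl prec_refl, MarkedLex.trans lt_trans prec_trans,
    MarkedLex.irrefl lt_irrefl _root_.lt_irrefl,
    MarkedLex.trans lt_trans fun _ _ _ => _root_.lt_trans,
    fun _ _ _ _ => MarkedLex.lt_of_le_of_lt_of_le lt_trans,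
    MarkedLex.closedSubst _, MarkedLex.closedSubst _,
    MarkedLex.wellFounded lt_wf wellFounded_gt,
    fun f ss i _ => MarkedLex.app_update hmonoS prec_refl f ss i⟩
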